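/- For the GHZ state |GHZ> = (|000>+|111>)/√2 with single-qubit observables A0 = [[0,e^{-iπ/6}],[e^{iπ/6},0]] and A1 = [[0,e^{-i2π/3}],[e^{i2π/3},0]] on each party, the expectation values satisfy <A0⊗A1⊗A0> = <A1⊗A0⊗A0> = <A0⊗A0⊗A1> = -1 and <A1⊗A1⊗A1> = +1, while all single-body and two-body expectation values (with identity on the remaining parties) vanish. -/

import Mathlib

/-!
Write `ghzExp (A ⊗ B ⊗ C)` in the GHZ basis: only the entries between `|000⟩` and `|111⟩`
contribute, so it is half the sum of the four products `A i j * B i j * C i j` with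
`i, j ∈ {00, 11}`. Each observable has the form `!![0, e^{-iθ}; e^{iθ}, 0]`; three of them give
`Re e^{i(θ₁+θ₂+θ₃)} = cos(θ₁+θ₂+θ₃)`, and the phase sums are `π` or `2π`. If the identity
stands in some slot, the off-diagonal products vanish because of it and the diagonal
products vanish because of the hollow observable.
-/

open Kronecker Matrix

/-- The observables `![A0, A1]` with `A0 = [[0, e^{-iπ/6}], [e^{iπ/6}, 0]]` and
`A1 = [[0, e^{-i2π/3}], [e^{i2π/3}, 0]]`. -/
noncomputable def obs : Fin 2 → Matrix (Fin 2) (Fin 2) ℂ :=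
  ![!![0, Complex.exp (-(Complex.I * (Real.pi / 6)));
      Complex.exp (Complex.I * (Real.pi / 6)), 0],
    !![0, Complex.exp (-(Complex.I * (2 * Real.pi / 3)));
      Complex.exp (Complex.I * (2 * Real.pi / 3)), 0]]

/-- The GHZ state `(|000⟩ + |111⟩)/√2`. -/
noncomputable def ghzVec : ((Fin 2 × Fin 2) × Fin 2) → ℂ :=
  fun p => if p = ((0, 0), 0) ∨ p = ((1, 1), 1) then ((1 / Real.sqrt 2 : ℝ) : ℂ) else 0

/-- Expectation value `⟨GHZ|O|GHZ⟩` of an operator on `(ℂ²)^{⊗3}`. -/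
noncomputable def ghzExp (O : Matrix ((Fin 2 × Fin 2) × Fin 2) ((Fin 2 × Fin 2) × Fin 2) ℂ) : ℂ :=
  star ghzVec ⬝ᵥ O.mulVec ghzVec

open Complex
open scoped Real

lemma ghzExp_eq (O : Matrix ((Fin 2 × Fin 2) × Fin 2) ((Fin 2 × Fin 2) × Fin 2) ℂ) :
    ghzExp O = (O ((0, 0), 0) ((0, 0), 0) + O ((0, 0), 0) ((1, 1), 1)
      + O ((1, 1), 1) ((0, 0), 0) + O ((1, 1), 1) ((1, 1), 1)) / 2 := by
  have hsqrt : ((Real.sqrt 2 : ℝ) : ℂ) ^ 2 = 2 := by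
    norm_cast
    exact Real.sq_sqrt zero_le_two
  simp only [ghzExp, dotProduct, Pi.star_apply, ghzVec, one_div, ofReal_inv, RCLike.star_def,
    mulVec, mul_ite, mul_zero, Fintype.sum_prod_type, Prod.mk.injEq, Fin.sum_univ_succ, and_true,
    zero_ne_one, and_false, or_false, Finset.univ_unique, Fin.default_eq_zero, Fin.succ_ne_zero,
    false_or, Finset.sum_singleton, Fin.succ_zero_eq_one, ↓reduceIte, add_zero, zero_add, map_zero,
    zero_mul, map_inv₀, conj_ofReal]
  field_simp
  rw [hsqrt]
  ring

lemma ghzExp_kronecker (A B C : Matrix (Fin 2) (Fin 2) ℂ) :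
    ghzExp (A ⊗ₖ B ⊗ₖ C) = (A 0 0 * B 0 0 * C 0 0 + A 0 1 * B 0 1 * C 0 1
      + A 1 0 * B 1 0 * C 1 0 + A 1 1 * B 1 1 * C 1 1) / 2 := by
  simp only [ghzExp_eq, kroneckerMap_apply]

noncomputable def phaseFlip (θ : ℝ) : Matrix (Fin 2) (Fin 2) ℂ :=
  !![0, exp (-(I * θ)); exp (I * θ), 0]

lemma obs_eq_phaseFlip (x : Fin 2) : obs x = phaseFlip (![π / 6, 2 * π / 3] x) := by
  fin_cases x <;> simp [obs, phaseFlip]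

lemma ghzExp_phaseFlip_kronecker (a b c : ℝ) :
    ghzExp (phaseFlip a ⊗ₖ phaseFlip b ⊗ₖ phaseFlip c) = Real.cos (a + b + c) := by
  rw [ghzExp_kronecker, ofReal_cos, Complex.cos]
  simp only [phaseFlip, of_apply, cons_val', cons_val_zero, cons_val_one, empty_val',
    cons_val_fin_one, mul_zero, zero_add, add_zero, ← exp_add]
  rw [add_comm]
  congr 3 <;> push_cast <;> ring

lemma phaseFlip_diag (θ : ℝ) : (phaseFlip θ).diag = 0 := by
  ext i; fin_cases i <;> rfl

lemma ghzExp_kronecker_eq_zero {A B C : Matrix (Fin 2) (Fin 2) ℂ}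
    (hollow : A.diag = 0 ∨ B.diag = 0 ∨ C.diag = 0) (diagonal : A.IsDiag ∨ B.IsDiag ∨ C.IsDiag) :
    ghzExp (A ⊗ₖ B ⊗ₖ C) = 0 := by
  have h01 : A 0 1 * B 0 1 * C 0 1 = 0 ∧ A 1 0 * B 1 0 * C 1 0 = 0 := by
    rcases diagonal with h | h | h <;> simp [h zero_ne_one, h one_ne_zero]
  have h00 : A 0 0 * B 0 0 * C 0 0 = 0 ∧ A 1 1 * B 1 1 * C 1 1 = 0 := by
    rcases hollow with h | h | h <;> simp [← diag_apply, h]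
  rw [ghzExp_kronecker, h00.1, h00.2, h01.1, h01.2]
  norm_num

/-- On the GHZ state, `⟨A0⊗A1⊗A0⟩ = ⟨A1⊗A0⊗A0⟩ = ⟨A0⊗A0⊗A1⟩ = -1`,
`⟨A1⊗A1⊗A1⟩ = +1`, and all single-body and two-body expectation values vanish. -/
theorem ghz_correlators :
    ghzExp (obs 0 ⊗ₖ obs 1 ⊗ₖ obs 0) = -1 ∧
    ghzExp (obs 1 ⊗ₖ obs 0 ⊗ₖ obs 0) = -1 ∧
    ghzExp (obs 0 ⊗ₖ obs 0 ⊗ₖ obs 1) = -1 ∧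
    ghzExp (obs 1 ⊗ₖ obs 1 ⊗ₖ obs 1) = 1 ∧
    (∀ x : Fin 2,
      ghzExp (obs x ⊗ₖ (1 : Matrix (Fin 2) (Fin 2) ℂ) ⊗ₖ (1 : Matrix (Fin 2) (Fin 2) ℂ)) = 0 ∧
      ghzExp ((1 : Matrix (Fin 2) (Fin 2) ℂ) ⊗ₖ obs x ⊗ₖ (1 : Matrix (Fin 2) (Fin 2) ℂ)) = 0 ∧
      ghzExp ((1 : Matrix (Fin 2) (Fin 2) ℂ) ⊗ₖ (1 : Matrix (Fin 2) (Fin 2) ℂ) ⊗ₖ obs x) = 0) ∧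
    (∀ x y : Fin 2,
      ghzExp (obs x ⊗ₖ obs y ⊗ₖ (1 : Matrix (Fin 2) (Fin 2) ℂ)) = 0 ∧
      ghzExp (obs x ⊗ₖ (1 : Matrix (Fin 2) (Fin 2) ℂ) ⊗ₖ obs y) = 0 ∧
      ghzExp ((1 : Matrix (Fin 2) (Fin 2) ℂ) ⊗ₖ obs x ⊗ₖ obs y) = 0) := by
  simp only [obs_eq_phaseFlip, ghzExp_phaseFlip_kronecker, cons_val_zero, cons_val_one]
  refine ⟨?_, ?_, ?_, ?_, fun x => ⟨?_, ?_, ?_⟩, fun x y => ⟨?_, ?_, ?_⟩⟩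
  · rw [show π / 6 + 2 * π / 3 + π / 6 = π by ring, Real.cos_pi, ofReal_neg, ofReal_one]
  · rw [show 2 * π / 3 + π / 6 + π / 6 = π by ring, Real.cos_pi, ofReal_neg, ofReal_one]
  · rw [show π / 6 + π / 6 + 2 * π / 3 = π by ring, Real.cos_pi, ofReal_neg, ofReal_one]
  · rw [show 2 * π / 3 + 2 * π / 3 + 2 * π / 3 = 2 * π by ring, Real.cos_two_pi, ofReal_one]
  all_goals exact ghzExp_kronecker_eq_zero (by simp [phaseFlip_diag]) (by simp [isDiag_one])
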